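/- Let u ∼ N(0, D) on ℝᵖ and δ ∼ N(0, I_n) on ℝⁿ be independent, D symmetric positive definite, Φ an n×p real matrix, α ∈ ℝⁿ fixed. Define v = Φu + δ and θ = u + D Φᵀ (Φ D Φᵀ + I_n)⁻¹ (α − v). Then θ ∼ N(μ, Σ) with Σ = (ΦᵀΦ + D⁻¹)⁻¹ and μ = Σ Φᵀ α. -/

import Mathlib

/-!
A linear functional of `θ` splits as `a ⬝ᵥ u + b ⬝ᵥ δ + c`, a sum of two independent real
Gaussians plus a constant, so `θ` is Gaussian with mean and covariance computed from the affine
map. Writing `Σ = (ΦᵀΦ + D⁻¹)⁻¹`, the push-through identity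
`(ΦᵀΦ + D⁻¹) D Φᵀ = Φᵀ (Φ D Φᵀ + 1)` turns the gain `D Φᵀ (Φ D Φᵀ + 1)⁻¹` into `Σ Φᵀ`, which gives
the mean, and `1 - Σ Φᵀ Φ = Σ D⁻¹` reduces the covariance to `Σ (D⁻¹ + ΦᵀΦ) Σ = Σ`.
-/

open Matrix MeasureTheory ProbabilityTheory

/-- A random vector `x` is Gaussian with mean `m` and covariance `C` if every linear
functional of it is a real Gaussian with the corresponding mean and variance. -/
def IsGaussianVec {Ω : Type*} [MeasurableSpace Ω] (Pm : Measure Ω)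
    {ι : Type*} [Fintype ι] (x : Ω → ι → ℝ) (m : ι → ℝ) (C : Matrix ι ι ℝ) : Prop :=
  ∀ t : ι → ℝ, Measure.map (fun ω => t ⬝ᵥ x ω) Pm =
    gaussianReal (t ⬝ᵥ m) (t ⬝ᵥ (C *ᵥ t)).toNNReal

open scoped NNReal

lemma gaussianReal_add_gaussianReal_add_const_of_indepFun {Ω : Type*} [MeasurableSpace Ω]
    {P : Measure Ω} {X Y : Ω → ℝ} (hXY : IndepFun X Y P) {m₁ m₂ : ℝ} {v₁ v₂ : ℝ≥0}
    (hX : P.map X = gaussianReal m₁ v₁) (hY : P.map Y = gaussianReal m₂ v₂) (c : ℝ) :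
    P.map (fun ω => X ω + Y ω + c) = gaussianReal (m₁ + m₂ + c) (v₁ + v₂) := by
  have hsum := gaussianReal_add_gaussianReal_of_indepFun hXY hX hY
  have hsum_ae : AEMeasurable (X + Y) P := .of_map_ne_zero (by simp [hsum, NeZero.ne])
  rw [← gaussianReal_map_add_const, ← hsum,
    AEMeasurable.map_map_of_aemeasurable (measurable_add_const c).aemeasurable hsum_ae]
  rfl

lemma dotProduct_mul_mul_transpose_mulVec {R ι κ : Type*} [CommSemiring R] [Fintype ι] [Fintype κ]
    (t : κ → R) (A : Matrix κ ι R) (C : Matrix ι ι R) :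
    t ⬝ᵥ ((A * C * Aᵀ) *ᵥ t) = (t ᵥ* A) ⬝ᵥ (C *ᵥ (t ᵥ* A)) := by
  rw [Matrix.mul_assoc, ← mulVec_mulVec, dotProduct_mulVec, ← mulVec_mulVec, mulVec_transpose]

lemma IsGaussianVec.mulVec_add_mulVec_add_const {Ω : Type*} [MeasurableSpace Ω] {P : Measure Ω}
    {ι ι' κ : Type*} [Fintype ι] [Fintype ι'] [Fintype κ]
    {x : Ω → ι → ℝ} {y : Ω → ι' → ℝ} {m₁ : ι → ℝ} {m₂ : ι' → ℝ}
    {C₁ : Matrix ι ι ℝ} {C₂ : Matrix ι' ι' ℝ}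
    (hx : IsGaussianVec P x m₁ C₁) (hy : IsGaussianVec P y m₂ C₂)
    (hC₁ : C₁.PosSemidef) (hC₂ : C₂.PosSemidef) (hxy : IndepFun x y P)
    (A : Matrix κ ι ℝ) (B : Matrix κ ι' ℝ) (c : κ → ℝ) :
    IsGaussianVec P (fun ω => A *ᵥ x ω + B *ᵥ y ω + c) (A *ᵥ m₁ + B *ᵥ m₂ + c)
      (A * C₁ * Aᵀ + B * C₂ * Bᵀ) := by
  intro t
  have hlin : IndepFun (fun ω => (t ᵥ* A) ⬝ᵥ x ω) (fun ω => (t ᵥ* B) ⬝ᵥ y ω) P :=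
    hxy.comp (φ := ((t ᵥ* A) ⬝ᵥ ·)) (ψ := ((t ᵥ* B) ⬝ᵥ ·)) (by fun_prop) (by fun_prop)
  have hvar₁ := hC₁.dotProduct_mulVec_nonneg (t ᵥ* A)
  have hvar₂ := hC₂.dotProduct_mulVec_nonneg (t ᵥ* B)
  simp only [star_trivial] at hvar₁ hvar₂
  convert gaussianReal_add_gaussianReal_add_const_of_indepFun hlin (hx _) (hy _) (t ⬝ᵥ c) using 2
  · simp only [dotProduct_add, dotProduct_mulVec]
  · simp only [dotProduct_add, dotProduct_mulVec]
  · rw [add_mulVec, dotProduct_add, dotProduct_mul_mul_transpose_mulVec,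
      dotProduct_mul_mul_transpose_mulVec, Real.toNNReal_add hvar₁ hvar₂]

namespace Matrix

variable {R : Type*} [CommRing R] {n p : Type*} [Fintype n] [Fintype p] [DecidableEq p]
  (Φ : Matrix n p R) {D : Matrix p p R}

theorem inv_transpose_mul_add_inv_mul_transpose [DecidableEq n] (hD : IsUnit D.det)
    (hS : IsUnit (Φᵀ * Φ + D⁻¹).det) (hE : IsUnit (Φ * D * Φᵀ + 1).det) :
    (Φᵀ * Φ + D⁻¹)⁻¹ * Φᵀ = D * Φᵀ * (Φ * D * Φᵀ + 1)⁻¹ := by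
  have hpush : (Φᵀ * Φ + D⁻¹) * (D * Φᵀ) = Φᵀ * (Φ * D * Φᵀ + 1) := by
    rw [Matrix.add_mul, ← Matrix.mul_assoc D⁻¹, nonsing_inv_mul D hD, Matrix.one_mul,
      Matrix.mul_add, Matrix.mul_one]
    simp only [Matrix.mul_assoc]
  calc (Φᵀ * Φ + D⁻¹)⁻¹ * Φᵀ
      = (Φᵀ * Φ + D⁻¹)⁻¹ * (Φᵀ * (Φ * D * Φᵀ + 1)) * (Φ * D * Φᵀ + 1)⁻¹ := by
        rw [Matrix.mul_assoc _ (Φᵀ * _), Matrix.mul_assoc Φᵀ, mul_nonsing_inv _ hE, Matrix.mul_one]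
    _ = D * Φᵀ * (Φ * D * Φᵀ + 1)⁻¹ := by
        rw [← hpush, ← Matrix.mul_assoc, nonsing_inv_mul _ hS, Matrix.one_mul]

theorem one_sub_mul_mul_one_sub_mul_transpose_add_mul_transpose (hDt : Dᵀ = D)
    (hD : IsUnit D.det) (hS : IsUnit (Φᵀ * Φ + D⁻¹).det) :
    (1 - (Φᵀ * Φ + D⁻¹)⁻¹ * Φᵀ * Φ) * D * (1 - (Φᵀ * Φ + D⁻¹)⁻¹ * Φᵀ * Φ)ᵀ
      + (Φᵀ * Φ + D⁻¹)⁻¹ * Φᵀ * ((Φᵀ * Φ + D⁻¹)⁻¹ * Φᵀ)ᵀ = (Φᵀ * Φ + D⁻¹)⁻¹ := by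
  set S := (Φᵀ * Φ + D⁻¹)⁻¹
  have hSS : S * (Φᵀ * Φ + D⁻¹) = 1 := nonsing_inv_mul _ hS
  have hSt : Sᵀ = S := by
    rw [transpose_nonsing_inv, transpose_add, transpose_mul, transpose_transpose,
      transpose_nonsing_inv, hDt]
  have hgain : 1 - S * Φᵀ * Φ = S * D⁻¹ := by
    rw [← hSS, mul_add, Matrix.mul_assoc]
    abel
  rw [hgain, transpose_mul, transpose_mul, transpose_transpose, hSt, transpose_nonsing_inv, hDt]
  calc S * D⁻¹ * D * (D⁻¹ * S) + S * Φᵀ * (Φ * S)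
      = S * (Φᵀ * Φ + D⁻¹ * D * D⁻¹) * S := by
        simp only [Matrix.mul_add, Matrix.add_mul, Matrix.mul_assoc, add_comm]
    _ = S := by rw [nonsing_inv_mul D hD, Matrix.one_mul, hSS, Matrix.one_mul]

end Matrix

theorem algorithm_correctness_general {Ω : Type*} [MeasurableSpace Ω] (Pm : Measure Ω)
    {n p : ℕ} (Φ : Matrix (Fin n) (Fin p) ℝ)
    (D : Matrix (Fin p) (Fin p) ℝ) (hD : D.PosDef) (α : Fin n → ℝ)
    (u : Ω → Fin p → ℝ) (δ : Ω → Fin n → ℝ)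
    (hu : IsGaussianVec Pm u 0 D) (hδ : IsGaussianVec Pm δ 0 1)
    (hindep : IndepFun u δ Pm) :
    let v : Ω → Fin n → ℝ := fun ω => Φ *ᵥ u ω + δ ω
    let θ : Ω → Fin p → ℝ :=
      fun ω => u ω + (D * Φᵀ * (Φ * D * Φᵀ + 1)⁻¹) *ᵥ (α - v ω)
    let Sig := (Φᵀ * Φ + D⁻¹)⁻¹
    IsGaussianVec Pm θ ((Sig * Φᵀ) *ᵥ α) Sig := by
  intro v θ Sig
  have hDt : Dᵀ = D := hD.isHermitian
  have hS : (Φᵀ * Φ + D⁻¹).PosDef :=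
    add_comm (Φᵀ * Φ) _ ▸ hD.inv.add_posSemidef (posSemidef_conjTranspose_mul_self Φ)
  have hE : (Φ * D * Φᵀ + 1).PosDef :=
    add_comm _ (1 : Matrix (Fin n) (Fin n) ℝ) ▸
      PosDef.one.add_posSemidef (hD.posSemidef.mul_mul_conjTranspose_same Φ)
  have hDu := hD.det_pos.ne'.isUnit
  have hSu := hS.det_pos.ne'.isUnit
  have hK : D * Φᵀ * (Φ * D * Φᵀ + 1)⁻¹ = Sig * Φᵀ :=
    (inv_transpose_mul_add_inv_mul_transpose Φ hDu hSu hE.det_pos.ne'.isUnit).symm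
  have hθ : θ = fun ω => (1 - Sig * Φᵀ * Φ) *ᵥ u ω + (-(Sig * Φᵀ)) *ᵥ δ ω + (Sig * Φᵀ) *ᵥ α := by
    funext ω
    simp only [θ, v, hK, mulVec_sub, mulVec_add, sub_mulVec, neg_mulVec, one_mulVec, mulVec_mulVec]
    abel
  rw [hθ]
  convert hu.mulVec_add_mulVec_add_const hδ hD.posSemidef PosSemidef.one hindep
    (1 - Sig * Φᵀ * Φ) (-(Sig * Φᵀ)) ((Sig * Φᵀ) *ᵥ α) using 1
  · simp only [mulVec_zero, zero_add]
  · rw [Matrix.mul_one, Matrix.neg_mul, transpose_neg, Matrix.mul_neg, neg_neg,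
      one_sub_mul_mul_one_sub_mul_transpose_add_mul_transpose Φ hDt hDu hSu]

theorem algorithm_correctness {Ω : Type*} [MeasurableSpace Ω] (Pm : Measure Ω)
    [IsProbabilityMeasure Pm] {n p : ℕ} (Φ : Matrix (Fin n) (Fin p) ℝ)
    (D : Matrix (Fin p) (Fin p) ℝ) (hD : D.PosDef) (α : Fin n → ℝ)
    (u : Ω → Fin p → ℝ) (δ : Ω → Fin n → ℝ)
    (hu : IsGaussianVec Pm u 0 D) (hδ : IsGaussianVec Pm δ 0 1)
    (hu_meas : Measurable u) (hδ_meas : Measurable δ)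
    (hindep : IndepFun u δ Pm) :
    let v : Ω → Fin n → ℝ := fun ω => Φ *ᵥ u ω + δ ω
    let θ : Ω → Fin p → ℝ :=
      fun ω => u ω + (D * Φᵀ * (Φ * D * Φᵀ + 1)⁻¹) *ᵥ (α - v ω)
    let Sig := (Φᵀ * Φ + D⁻¹)⁻¹
    IsGaussianVec Pm θ ((Sig * Φᵀ) *ᵥ α) Sig :=
  algorithm_correctness_general Pm Φ D hD α u δ hu hδ hindep
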